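/- Let (q_j)_{j∈ℕ} be a sequence of real numbers with q_j > 1 for all j, and suppose lim_{j→∞} (log q_j)/(log q_{j-1}) = k for some real k > 1. Then lim_{j→∞} (Σ_{i=1}^{j-1} log q_i)/(log q_j) = 1/(k − 1). -/

import Mathlib

open Filter

theorem stmt_15 (q : ℕ → ℝ) (hq : ∀ j, 1 < q j) (k : ℝ) (hk : 1 < k)
    (hlim : Tendsto (fun j : ℕ => Real.log (q (j + 1)) / Real.log (q j)) atTop (nhds k)) :
    Tendsto (fun j : ℕ => (∑ i ∈ Finset.range j, Real.log (q i)) / Real.log (q j))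
      atTop (nhds (1 / (k - 1))) := by
  set L : ℕ → ℝ := fun j => Real.log (q j) with hLdef
  have hL : ∀ j, 0 < L j := fun j => Real.log_pos (hq j)
  set c : ℝ := 1 / (k - 1) with hc
  have hk0 : (0:ℝ) < k := lt_trans one_pos hk
  have hk1 : k - 1 ≠ 0 := by linarith [hk]
  have hcpos : 0 < c := by
    rw [hc]; exact div_pos one_pos (by linarith)
  have hkey : (c + 1) * k⁻¹ = c := by
    rw [hc]; field_simp; ring
  set a : ℕ → ℝ := fun j => (∑ i ∈ Finset.range j, L i) / L j with ha
  set s : ℕ → ℝ := fun j => L j / L (j + 1) with hs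
  have hspos : ∀ j, 0 < s j := fun j => div_pos (hL j) (hL (j + 1))
  have hrec : ∀ j, a (j + 1) = (a j + 1) * s j := by
    intro j
    simp only [ha, hs, Finset.sum_range_succ]
    field_simp [ne_of_gt (hL j), ne_of_gt (hL (j+1))]
  have hstend : Tendsto s atTop (nhds k⁻¹) := by
    have := hlim.inv₀ (ne_of_gt hk0)
    simpa only [inv_div] using this
  -- contraction constant
  set ρ : ℝ := (k⁻¹ + 1) / 2 with hρ
  have hkinv1 : k⁻¹ < 1 := by
    rw [inv_lt_one_iff₀]; right; exact hk
  have hρ0 : 0 < ρ := by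
    have : (0:ℝ) < k⁻¹ := by positivity
    rw [hρ]; linarith
  have hρ1 : ρ < 1 := by rw [hρ]; linarith
  have hkρ : k⁻¹ < ρ := by rw [hρ]; linarith
  -- tendsto of the affine error term
  have herr : Tendsto (fun j => (c + 1) * s j - c) atTop (nhds 0) := by
    have h1 : Tendsto (fun j => (c + 1) * s j - c) atTop (nhds ((c + 1) * k⁻¹ - c)) :=
      ((hstend.const_mul (c + 1)).sub_const c)
    rwa [hkey, sub_self] at h1
  rw [Metric.tendsto_atTop]
  intro ε hε
  have hδpos : 0 < ε / 2 * (1 - ρ) := by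
    have : 0 < 1 - ρ := by linarith
    positivity
  have h1 : ∀ᶠ j in atTop, s j ≤ ρ := by
    have := hstend.eventually_le_const hkρ
    filter_upwards [this] with j hj using hj
  have h2 : ∀ᶠ j in atTop, |(c + 1) * s j - c| ≤ ε / 2 * (1 - ρ) := by
    have := Metric.tendsto_atTop.mp herr (ε / 2 * (1 - ρ)) hδpos
    obtain ⟨N, hN⟩ := this
    rw [eventually_atTop]
    exact ⟨N, fun j hj => by simpa [Real.dist_eq] using (hN j hj).le⟩
  rw [eventually_atTop] at h1 h2
  obtain ⟨N1, hN1⟩ := h1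
  obtain ⟨N2, hN2⟩ := h2
  set N := max N1 N2 with hN
  -- key induction
  have key : ∀ n : ℕ, |a (N + n) - c| ≤ ρ ^ n * |a N - c| + ε / 2 := by
    intro n
    induction n with
    | zero => simp; linarith [abs_nonneg (a N - c), hε]
    | succ n ih =>
      have hNn1 : N1 ≤ N + n := le_trans (le_max_left _ _) (Nat.le_add_right _ _)
      have hNn2 : N2 ≤ N + n := le_trans (le_max_right _ _) (Nat.le_add_right _ _)
      have hsub : a (N + n + 1) - c = (a (N + n) - c) * s (N + n) + ((c + 1) * s (N + n) - c) := by
        rw [hrec]; ring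
      have hstep : |a (N + n + 1) - c| ≤ |a (N + n) - c| * ρ + ε / 2 * (1 - ρ) := by
        rw [hsub]
        refine le_trans (abs_add_le _ _) ?_
        gcongr
        · rw [abs_mul, abs_of_pos (hspos (N + n))]
          exact mul_le_mul_of_nonneg_left (hN1 _ hNn1) (abs_nonneg _)
        · exact hN2 _ hNn2
      have : |a (N + n) - c| * ρ ≤ (ρ ^ n * |a N - c| + ε / 2) * ρ :=
        mul_le_mul_of_nonneg_right ih (le_of_lt hρ0)
      calc |a (N + (n + 1)) - c| = |a (N + n + 1) - c| := by ring_nf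
        _ ≤ |a (N + n) - c| * ρ + ε / 2 * (1 - ρ) := hstep
        _ ≤ (ρ ^ n * |a N - c| + ε / 2) * ρ + ε / 2 * (1 - ρ) := by linarith
        _ = ρ ^ (n + 1) * |a N - c| + ε / 2 := by ring
  -- ρ^n * |a N - c| → 0
  have hpow : Tendsto (fun n => ρ ^ n * |a N - c|) atTop (nhds 0) := by
    have := tendsto_pow_atTop_nhds_zero_of_lt_one (le_of_lt hρ0) hρ1
    simpa using this.mul_const |a N - c|
  obtain ⟨M, hM⟩ := Metric.tendsto_atTop.mp hpow (ε / 2) (by linarith)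
  refine ⟨N + M, fun n hn => ?_⟩
  have hrepr : n = N + (n - N) := by omega
  have hMn : M ≤ n - N := by omega
  have h3 := key (n - N)
  have h4 := hM (n - N) hMn
  rw [Real.dist_eq] at h4 ⊢
  rw [← hrepr] at h3
  have h5 : ρ ^ (n - N) * |a N - c| < ε / 2 := by
    simpa [abs_of_nonneg (mul_nonneg (pow_nonneg (le_of_lt hρ0) _) (abs_nonneg _))] using h4
  calc |a n - c| ≤ ρ ^ (n - N) * |a N - c| + ε / 2 := h3
    _ < ε / 2 + ε / 2 := by linarith
    _ = ε := by ring
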